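/- arXiv:1507.07461 — 6 statements merged into one kernel-verified Lean document; each statement's English description precedes it below -/
import Mathlib

section
/- For s ∈ ℝ, the function s ↦ ρ(A(s)) mapping s to the spectral radius of the Mauldin–Williams matrix A(s) (with entries Σ_{e ∈ E_{uv}} r_e^s, r_e ∈ (0,1), graph strongly connected with every vertex having an outgoing edge) is strictly decreasing on [0,∞). -/
/-!
Write `A(s)` as the complexification of the nonnegative real matrix `N(s)`. If `R < 1` is the
largest weight and `s < t`, then `N(t) ≤ R^(t-s) • N(s)` entrywise. For nonnegative matrices,
entrywise domination passes to powers and to the `ℓ∞` operator norm (the largest row sum), so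
Gelfand's formula gives `ρ(A(t)) ≤ R^(t-s) ρ(A(s))`. Strictness needs `ρ(A(s)) > 0`: every row
of `N(s)` has a positive entry, so with `μ > 0` the smallest row sum, every row sum of `N(s)^n`
is at least `μ^n`, whence `ρ(A(s)) ≥ μ`.
-/

open Finset
open scoped NNReal ENNReal

attribute [local instance] Matrix.linftyOpNormedAddCommGroup Matrix.linftyOpNormedRing
  Matrix.linftyOpNormedAlgebra

section GelfandComparison

variable {𝔸 : Type*} [NormedRing 𝔸] [NormedAlgebra ℂ 𝔸] [CompleteSpace 𝔸]

theorem le_spectralRadius_of_pow_le_nnnorm_pow {a : 𝔸} {m : ℝ≥0}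
    (h : ∀ n : ℕ, m ^ n ≤ ‖a ^ n‖₊) : (m : ℝ≥0∞) ≤ spectralRadius ℂ a := by
  refine ge_of_tendsto (spectrum.pow_nnnorm_pow_one_div_tendsto_nhds_spectralRadius a) ?_
  filter_upwards [Filter.eventually_ne_atTop 0] with n hn
  calc (m : ℝ≥0∞) = ((m : ℝ≥0∞) ^ n) ^ (1 / n : ℝ) := by
        rw [one_div, ENNReal.pow_rpow_inv_natCast hn]
    _ ≤ (‖a ^ n‖₊ : ℝ≥0∞) ^ (1 / n : ℝ) :=
        ENNReal.rpow_le_rpow (by exact_mod_cast h n) (by positivity)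

theorem spectralRadius_le_mul_of_nnnorm_pow_le {a b : 𝔸} {c : ℝ≥0}
    (h : ∀ n : ℕ, ‖b ^ n‖₊ ≤ c ^ n * ‖a ^ n‖₊) :
    spectralRadius ℂ b ≤ c * spectralRadius ℂ a := by
  refine le_of_tendsto_of_tendsto
    (spectrum.pow_nnnorm_pow_one_div_tendsto_nhds_spectralRadius b)
    (ENNReal.Tendsto.const_mul (spectrum.pow_nnnorm_pow_one_div_tendsto_nhds_spectralRadius a)
      (Or.inr ENNReal.coe_ne_top)) ?_
  filter_upwards [Filter.eventually_ne_atTop 0] with n hn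
  calc (‖b ^ n‖₊ : ℝ≥0∞) ^ (1 / n : ℝ)
      ≤ ((c : ℝ≥0∞) ^ n * ‖a ^ n‖₊) ^ (1 / n : ℝ) :=
        ENNReal.rpow_le_rpow (by exact_mod_cast h n) (by positivity)
    _ = c * (‖a ^ n‖₊ : ℝ≥0∞) ^ (1 / n : ℝ) := by
        rw [ENNReal.mul_rpow_of_nonneg _ _ (by positivity), one_div,
          ENNReal.pow_rpow_inv_natCast hn]

theorem spectralRadius_lt_of_nnnorm_pow_le {a b : 𝔸} {c : ℝ≥0} (hc : c < 1)
    (ha : 0 < spectralRadius ℂ a) (h : ∀ n : ℕ, ‖b ^ n‖₊ ≤ c ^ n * ‖a ^ n‖₊) :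
    spectralRadius ℂ b < spectralRadius ℂ a := by
  have ha_top : spectralRadius ℂ a ≠ ∞ :=
    ((spectrum.spectralRadius_le_pow_nnnorm_pow_one_div ℂ a 0).trans_lt
      (by simp [ENNReal.mul_lt_top])).ne
  calc spectralRadius ℂ b ≤ c * spectralRadius ℂ a := spectralRadius_le_mul_of_nnnorm_pow_le h
    _ < 1 * spectralRadius ℂ a :=
        ENNReal.mul_lt_mul_left ha.ne' ha_top (ENNReal.coe_lt_one_iff.2 hc)
    _ = spectralRadius ℂ a := one_mul _

end GelfandComparison

namespace Matrix

section Rectangular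

variable {m n : Type*} [Fintype m] [Fintype n]

theorem linfty_opNNNorm_map_algebraMap (P : Matrix m n ℝ≥0) :
    ‖P.map (algebraMap ℝ≥0 ℂ)‖₊ = univ.sup fun i => ∑ j, P i j := by
  simp [linfty_opNNNorm_def]

theorem linfty_opNNNorm_map_algebraMap_mono {P Q : Matrix m n ℝ≥0}
    (h : ∀ i j, P i j ≤ Q i j) :
    ‖P.map (algebraMap ℝ≥0 ℂ)‖₊ ≤ ‖Q.map (algebraMap ℝ≥0 ℂ)‖₊ := by
  simp only [linfty_opNNNorm_map_algebraMap]
  exact sup_mono_fun fun i _ => sum_le_sum fun j _ => h i j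

theorem sum_apply_le_linfty_opNNNorm_map_algebraMap (P : Matrix m n ℝ≥0) (i : m) :
    ∑ j, P i j ≤ ‖P.map (algebraMap ℝ≥0 ℂ)‖₊ := by
  rw [linfty_opNNNorm_map_algebraMap]
  exact le_sup (f := fun i => ∑ j, P i j) (mem_univ i)

end Rectangular

variable {n : Type*} [Fintype n] [DecidableEq n]

theorem pow_apply_mono {P Q : Matrix n n ℝ≥0} (h : ∀ i j, P i j ≤ Q i j) (k : ℕ) (i j : n) :
    (P ^ k) i j ≤ (Q ^ k) i j := by
  induction k generalizing j with
  | zero => exact le_rfl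
  | succ k ih =>
    rw [pow_succ, pow_succ, mul_apply, mul_apply]
    exact sum_le_sum fun l _ => mul_le_mul' (ih l) (h l j)

theorem pow_le_sum_pow_apply {P : Matrix n n ℝ≥0} {μ : ℝ≥0} (h : ∀ i, μ ≤ ∑ j, P i j)
    (k : ℕ) (i : n) : μ ^ k ≤ ∑ j, (P ^ k) i j := by
  induction k generalizing i with
  | zero => simp [one_apply]
  | succ k ih =>
    calc μ ^ (k + 1) = μ * μ ^ k := pow_succ' μ k
      _ ≤ ∑ l, P i l * μ ^ k := by rw [← sum_mul]; exact mul_le_mul_left (h i) _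
      _ ≤ ∑ l, P i l * ∑ j, (P ^ k) l j := sum_le_sum fun l _ => mul_le_mul_right (ih l) _
      _ = ∑ j, (P ^ (k + 1)) i j := by
        simp only [pow_succ', mul_apply, mul_sum]
        exact sum_comm

theorem le_spectralRadius_map_algebraMap [Nonempty n] {P : Matrix n n ℝ≥0} {μ : ℝ≥0}
    (h : ∀ i, μ ≤ ∑ j, P i j) : (μ : ℝ≥0∞) ≤ spectralRadius ℂ (P.map (algebraMap ℝ≥0 ℂ)) :=
  le_spectralRadius_of_pow_le_nnnorm_pow fun k => by
    obtain ⟨i⟩ := ‹Nonempty n›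
    rw [← Matrix.map_pow]
    exact (pow_le_sum_pow_apply h k i).trans (sum_apply_le_linfty_opNNNorm_map_algebraMap _ i)

theorem spectralRadius_map_algebraMap_pos [Nonempty n] {P : Matrix n n ℝ≥0}
    (h : ∀ i, ∃ j, 0 < P i j) : 0 < spectralRadius ℂ (P.map (algebraMap ℝ≥0 ℂ)) := by
  obtain ⟨i₀, -, hmin⟩ := univ.exists_min_image (fun i => ∑ j, P i j) univ_nonempty
  obtain ⟨j₀, hj₀⟩ := h i₀
  have hpos : 0 < ∑ j, P i₀ j := hj₀.trans_le (single_le_sum (fun j _ => zero_le) (mem_univ j₀))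
  exact (ENNReal.coe_pos.2 hpos).trans_le
    (le_spectralRadius_map_algebraMap fun i => hmin i (mem_univ i))

theorem spectralRadius_map_algebraMap_lt {P Q : Matrix n n ℝ≥0} {c : ℝ≥0} (hc : c < 1)
    (hQP : ∀ i j, Q i j ≤ c * P i j) (hP : 0 < spectralRadius ℂ (P.map (algebraMap ℝ≥0 ℂ))) :
    spectralRadius ℂ (Q.map (algebraMap ℝ≥0 ℂ)) < spectralRadius ℂ (P.map (algebraMap ℝ≥0 ℂ)) :=
  spectralRadius_lt_of_nnnorm_pow_le hc hP fun k => by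
    rw [← Matrix.map_pow, ← Matrix.map_pow]
    calc ‖(Q ^ k).map (algebraMap ℝ≥0 ℂ)‖₊ ≤ ‖((c • P) ^ k).map (algebraMap ℝ≥0 ℂ)‖₊ :=
          linfty_opNNNorm_map_algebraMap_mono (pow_apply_mono hQP k)
      _ = c ^ k * ‖(P ^ k).map (algebraMap ℝ≥0 ℂ)‖₊ := by
          simp only [smul_pow, linfty_opNNNorm_map_algebraMap, smul_apply, smul_eq_mul,
            ← mul_sum]
          exact (NNReal.mul_finset_sup _ _ _).symm

end Matrix

section MauldinWilliams

variable {V E : Type*} [DecidableEq V] [Fintype E] (src tgt : E → V) (r : E → ℝ≥0)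

noncomputable def mauldinWilliamsMatrix (s : ℝ) : Matrix V V ℝ≥0 :=
  Matrix.of fun u v => ∑ e ∈ univ.filter (fun e => src e = u ∧ tgt e = v), r e ^ s

variable {src tgt r}

theorem mauldinWilliamsMatrix_apply_pos {e : E} {u : V} (he : src e = u) (hr : 0 < r e)
    (s : ℝ) :
    0 < mauldinWilliamsMatrix src tgt r s u (tgt e) :=
  sum_pos' (fun _ _ => zero_le) ⟨e, mem_filter.2 ⟨mem_univ e, he, rfl⟩, NNReal.rpow_pos hr⟩

theorem mauldinWilliamsMatrix_apply_le {R : ℝ≥0} (hr : ∀ e, 0 < r e) (hR : ∀ e, r e ≤ R)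
    {s t : ℝ} (hst : s ≤ t) (u v : V) :
    mauldinWilliamsMatrix src tgt r t u v ≤
      R ^ (t - s) * mauldinWilliamsMatrix src tgt r s u v := by
  simp only [mauldinWilliamsMatrix, Matrix.of_apply, mul_sum]
  refine sum_le_sum fun e _ => ?_
  calc r e ^ t = r e ^ (t - s) * r e ^ s := by
        rw [← NNReal.rpow_add (hr e).ne', sub_add_cancel]
    _ ≤ R ^ (t - s) * r e ^ s :=
        mul_le_mul_left (NNReal.rpow_le_rpow (hR e) (sub_nonneg.2 hst)) _

theorem strictAnti_spectralRadius_mauldinWilliamsMatrix [Fintype V] [Nonempty V]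
    (hr : ∀ e, 0 < r e ∧ r e < 1) (hout : ∀ u, ∃ e, src e = u) :
    StrictAnti fun s =>
      spectralRadius ℂ ((mauldinWilliamsMatrix src tgt r s).map (algebraMap ℝ≥0 ℂ)) := by
  intro s t hst
  have : Nonempty E := ⟨(hout (Classical.arbitrary V)).choose⟩
  obtain ⟨e₀, -, hmax⟩ := univ.exists_max_image r univ_nonempty
  refine Matrix.spectralRadius_map_algebraMap_lt (NNReal.rpow_lt_one (hr e₀).2 (sub_pos.2 hst))
    (mauldinWilliamsMatrix_apply_le (fun e => (hr e).1) (fun e => hmax e (mem_univ e)) hst.le)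
    (Matrix.spectralRadius_map_algebraMap_pos fun u => ?_)
  obtain ⟨e, he⟩ := hout u
  exact ⟨tgt e, mauldinWilliamsMatrix_apply_pos he (hr e).1 s⟩

end MauldinWilliams

theorem spectralRadius_MW_strictAntiOn_general
    {V : Type*} [Fintype V] [DecidableEq V] [Nonempty V] {E : Type*} [Fintype E]
    (src tgt : E → V) (r : E → ℝ) (hr : ∀ e, 0 < r e ∧ r e < 1)
    (hout : ∀ u : V, ∃ e, src e = u)
    (A : ℝ → Matrix V V ℂ)
    (hA : ∀ s u v, A s u v =
      ∑ e ∈ univ.filter (fun e => src e = u ∧ tgt e = v), ((r e : ℂ) ^ (s : ℂ))) :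
    StrictAntiOn (fun s => spectralRadius ℂ (A s)) (Set.Ici (0 : ℝ)) := by
  have hA_eq : A = fun s =>
      (mauldinWilliamsMatrix src tgt (fun e => (r e).toNNReal) s).map (algebraMap ℝ≥0 ℂ) := by
    ext s u v
    rw [hA, Matrix.map_apply, mauldinWilliamsMatrix, Matrix.of_apply, map_sum]
    refine sum_congr rfl fun e _ => ?_
    rw [← Complex.ofReal_cpow (hr e).1.le, ← Real.coe_toNNReal _ (hr e).1.le, ← NNReal.coe_rpow,
      Real.toNNReal_coe]
    rfl
  subst hA_eq
  exact (strictAnti_spectralRadius_mauldinWilliamsMatrix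
    (fun e => ⟨Real.toNNReal_pos.2 (hr e).1, Real.toNNReal_lt_one.2 (hr e).2⟩) hout).strictAntiOn _

/-- For a strongly connected Mauldin–Williams graph (all weights in `(0,1)`, every vertex
with an outgoing edge), the spectral radius of the Mauldin–Williams matrix `A(s)` is a
strictly decreasing function of the real variable `s` on `[0,∞)`. -/
theorem spectralRadius_MW_strictAntiOn
    {V : Type*} [Fintype V] [DecidableEq V] [Nonempty V] {E : Type*} [Fintype E]
    (src tgt : E → V) (r : E → ℝ) (hr : ∀ e, 0 < r e ∧ r e < 1)
    (hout : ∀ u : V, ∃ e, src e = u)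
    (hconn : ∀ u v : V, Relation.ReflTransGen (fun a b => ∃ e, src e = a ∧ tgt e = b) u v)
    (A : ℝ → Matrix V V ℂ)
    (hA : ∀ s u v, A s u v =
      ∑ e ∈ univ.filter (fun e => src e = u ∧ tgt e = v), ((r e : ℂ) ^ (s : ℂ))) :
    StrictAntiOn (fun s => spectralRadius ℂ (A s)) (Set.Ici (0 : ℝ)) :=
  spectralRadius_MW_strictAntiOn_general src tgt r hr hout A hA
end

section
/- (Multi-dimensional renewal lemma) Let G = (V,E,r) be a strongly connected Mauldin–Williams graph with sim-value D (spectral radius of A(D) equals 1, with positive eigenvector p). Suppose functions h_u : ℝ → ℝ (u ∈ V) satisfy h_u(x) = Σ_{v∈V} Σ_{e∈E_{uv}} r_e^D h_v(x − log(1/r_e)) + ψ_u(x) for all x, where each ψ_u satisfies |ψ_u(x)| ≤ M e^{−τ|x|} for some constants M, τ > 0, and each h_u tends to 0 as x → −∞. Then each h_u is bounded on ℝ. -/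
/-!
The weight matrix `A(D)` is nonnegative and irreducible with spectral radius `1`, so it has a
positive fixed vector `p` (Perron–Frobenius): the moduli of an eigenvector for an eigenvalue of
modulus `1` give `q ≥ 0` with `q ≤ A q`, and if `A q ≠ q`, applying the positive matrix
`∑_{k<N} A^k` yields `p > 0` with `(1 + ε) p ≤ A p`, which by Gelfand's formula would force the
spectral radius up to `1 + ε`.

Scale `p ≥ 1`. All shifts `log (1 / r e)` are at least some `δ > 0`, so by induction over the
half-lines `x ≤ X + n δ` one gets `|h u x| ≤ p u (1 + ∑_{k<n} b k)`, where `|h| ≤ 1` left of `X` and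
`b k` bounds the forcing term on the `k`-th strip. The `b k` decay geometrically, so the bound is
uniform in `n`.
-/

open Finset Filter Topology
open scoped Matrix ENNReal NNReal

attribute [local instance] Matrix.linftyOpNormedRing Matrix.linftyOpNormedAlgebra

theorem spectrum.ofReal_le_spectralRadius_of_pow_le_norm {A : Type*} [NormedRing A]
    [NormedAlgebra ℂ A] [CompleteSpace A] (a : A) {s : ℝ} (hs : 0 ≤ s)
    (h : ∀ n : ℕ, s ^ n ≤ ‖a ^ n‖) : ENNReal.ofReal s ≤ spectralRadius ℂ a := by
  refine ge_of_tendsto (spectrum.pow_nnnorm_pow_one_div_tendsto_nhds_spectralRadius a) ?_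
  filter_upwards [eventually_ne_atTop 0] with n hn
  calc ENNReal.ofReal s = ENNReal.ofReal (s ^ n) ^ (1 / n : ℝ) := by
        rw [ENNReal.ofReal_pow hs, ← ENNReal.rpow_natCast, ← ENNReal.rpow_mul,
          mul_one_div_cancel (Nat.cast_ne_zero.2 hn), ENNReal.rpow_one]
    _ ≤ (‖a ^ n‖₊ : ℝ≥0∞) ^ (1 / n : ℝ) := by
        gcongr
        rw [← ENNReal.ofReal_coe_nnreal, coe_nnnorm]
        exact ENNReal.ofReal_le_ofReal (h n)

namespace Matrix

variable {n : Type*} [Fintype n] {B : Matrix n n ℝ}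

theorem mulVec_mono_of_nonneg (hB : ∀ i j, 0 ≤ B i j) {x y : n → ℝ} (hxy : x ≤ y) :
    B *ᵥ x ≤ B *ᵥ y := fun i =>
  Finset.sum_le_sum fun j _ => mul_le_mul_of_nonneg_left (hxy j) (hB i j)

theorem mulVec_pos_of_pos {P : Matrix n n ℝ} (hP : ∀ i j, 0 < P i j) {x : n → ℝ} (hx : 0 ≤ x)
    (hx0 : x ≠ 0) (i : n) : 0 < (P *ᵥ x) i := by
  obtain ⟨j, hj⟩ := Function.ne_iff.1 hx0
  exact Finset.sum_pos' (fun k _ => mul_nonneg (hP i k).le (hx k))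
    ⟨j, mem_univ j, mul_pos (hP i j) ((hx j).lt_of_ne' hj)⟩

variable [DecidableEq n]

theorem exists_nonneg_norm_smul_le_mulVec (hB : ∀ i j, 0 ≤ B i j) {μ : ℂ}
    (hμ : μ ∈ spectrum ℂ (B.map ((↑) : ℝ → ℂ))) : ∃ q : n → ℝ, 0 ≤ q ∧ q ≠ 0 ∧ ‖μ‖ • q ≤ B *ᵥ q := by
  rw [← spectrum_toLin', ← Module.End.hasEigenvalue_iff_mem_spectrum] at hμ
  obtain ⟨w, hw, hw0⟩ := hμ.exists_hasEigenvector
  have hAw : B.map ((↑) : ℝ → ℂ) *ᵥ w = μ • w := by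
    simpa [toLin'_apply] using Module.End.mem_eigenspace_iff.1 hw
  refine ⟨fun i => ‖w i‖, fun i => norm_nonneg _, fun h => hw0 (funext fun i => ?_), fun i => ?_⟩
  · simpa using congrFun h i
  · calc ‖μ‖ * ‖w i‖ = ‖(B.map ((↑) : ℝ → ℂ) *ᵥ w) i‖ := by simp [hAw]
      _ ≤ ∑ j, ‖(B i j : ℂ) * w j‖ := norm_sum_le _ _
      _ = (B *ᵥ fun i => ‖w i‖) i := by
        simp only [norm_mul, Complex.norm_real, Real.norm_of_nonneg (hB _ _)]; rfl

theorem pow_smul_le_pow_mulVec (hB : ∀ i j, 0 ≤ B i j) {s : ℝ} (hs : 0 ≤ s) {p : n → ℝ}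
    (h : s • p ≤ B *ᵥ p) (k : ℕ) : s ^ k • p ≤ (B ^ k) *ᵥ p := by
  induction k with
  | zero => simp
  | succ k ih =>
    calc s ^ (k + 1) • p = s ^ k • (s • p) := by rw [pow_succ, mul_smul]
      _ ≤ s ^ k • (B *ᵥ p) := smul_le_smul_of_nonneg_left h (pow_nonneg hs k)
      _ = B *ᵥ (s ^ k • p) := (mulVec_smul B _ p).symm
      _ ≤ B *ᵥ ((B ^ k) *ᵥ p) := mulVec_mono_of_nonneg hB ih
      _ = (B ^ (k + 1)) *ᵥ p := by rw [mulVec_mulVec, pow_succ']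

theorem ofReal_le_spectralRadius_map_of_smul_le_mulVec (hB : ∀ i j, 0 ≤ B i j) {s : ℝ}
    (hs : 0 ≤ s) {p : n → ℝ} (hp : 0 ≤ p) (hp0 : p ≠ 0) (h : s • p ≤ B *ᵥ p) :
    ENNReal.ofReal s ≤ spectralRadius ℂ (B.map ((↑) : ℝ → ℂ)) := by
  refine spectrum.ofReal_le_spectralRadius_of_pow_le_norm _ hs fun k => ?_
  have hk := pow_smul_le_pow_mulVec hB hs h k
  have hsk : 0 ≤ s ^ k := pow_nonneg hs k
  have hnorm : s ^ k * ‖p‖ ≤ ‖(B ^ k) *ᵥ p‖ := by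
    rw [← Real.norm_of_nonneg hsk, ← norm_smul]
    refine (pi_norm_le_iff_of_nonneg (norm_nonneg _)).2 fun i => ?_
    rw [Real.norm_of_nonneg (show 0 ≤ (s ^ k • p) i from mul_nonneg hsk (hp i))]
    exact ((hk i).trans (le_abs_self _)).trans (norm_le_pi_norm ((B ^ k) *ᵥ p) i)
  have hcast (x : n → ℝ) : ‖fun i => (x i : ℂ)‖ = ‖x‖ := by
    simp [← coe_nnnorm, Pi.nnnorm_def]
  have hmap : (B.map ((↑) : ℝ → ℂ)) ^ k *ᵥ (fun i => (p i : ℂ)) =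
      fun i => (((B ^ k) *ᵥ p) i : ℂ) := by
    rw [show B.map ((↑) : ℝ → ℂ) ^ k = (B ^ k).map ((↑) : ℝ → ℂ) from
      (map_pow Complex.ofRealHom.mapMatrix B k).symm]
    funext i
    exact (RingHom.map_mulVec Complex.ofRealHom _ p i).symm
  refine le_of_mul_le_mul_right ?_ (norm_pos_iff.2 hp0)
  calc s ^ k * ‖p‖ ≤ ‖(B ^ k) *ᵥ p‖ := hnorm
    _ = ‖(B.map ((↑) : ℝ → ℂ)) ^ k *ᵥ (fun i => (p i : ℂ))‖ := by rw [hmap, hcast]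
    _ ≤ ‖(B.map ((↑) : ℝ → ℂ)) ^ k‖ * ‖p‖ := by
      rw [← hcast p]; exact linfty_opNorm_mulVec _ _

theorem exists_pow_apply_pos_of_reflTransGen (hB : ∀ i j, 0 ≤ B i j) {i j : n}
    (h : Relation.ReflTransGen (fun a b => 0 < B a b) i j) : ∃ k, 0 < (B ^ k) i j := by
  induction h with
  | refl => exact ⟨0, by simp⟩
  | tail _ hlj ih =>
    obtain ⟨k, hk⟩ := ih
    refine ⟨k + 1, ?_⟩
    rw [pow_succ, mul_apply]
    exact Finset.sum_pos' (fun l _ => mul_nonneg (pow_apply_nonneg hB k i l) (hB l _))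
      ⟨_, mem_univ _, mul_pos hk hlj⟩

theorem exists_sum_pow_apply_pos (hB : ∀ i j, 0 ≤ B i j) (h : ∀ i j, ∃ k, 0 < (B ^ k) i j) :
    ∃ N, ∀ i j, 0 < (∑ k ∈ range N, B ^ k) i j := by
  choose k hk using h
  obtain ⟨N, hN⟩ := Finite.exists_le fun ij : n × n => k ij.1 ij.2
  refine ⟨N + 1, fun i j => ?_⟩
  rw [sum_apply]
  exact Finset.sum_pos' (fun m _ => pow_apply_nonneg hB m i j)
    ⟨k i j, mem_range.2 (Nat.lt_succ_of_le (hN (i, j))), hk i j⟩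

theorem exists_pos_mulVec_eq_self_of_spectralRadius_eq_one [Nonempty n]
    (hB : ∀ i j, 0 ≤ B i j) (hirr : ∀ i j, ∃ k, 0 < (B ^ k) i j)
    (hρ : spectralRadius ℂ (B.map ((↑) : ℝ → ℂ)) = 1) :
    ∃ p : n → ℝ, (∀ i, 0 < p i) ∧ B *ᵥ p = p := by
  obtain ⟨μ, hμ, hμ1⟩ := spectrum.exists_nnnorm_eq_spectralRadius_of_nonempty
    (spectrum.nonempty (B.map ((↑) : ℝ → ℂ)))
  rw [hρ, ENNReal.coe_eq_one] at hμ1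
  obtain ⟨q, hq0, hq, hqB⟩ := exists_nonneg_norm_smul_le_mulVec hB hμ
  rw [← coe_nnnorm, hμ1, NNReal.coe_one, one_smul] at hqB
  obtain ⟨N, hN⟩ := exists_sum_pow_apply_pos hB hirr
  set P := ∑ k ∈ range N, B ^ k
  have hBP : B * P = P * B := (Commute.sum_right _ _ _ fun k _ => Commute.self_pow B k).eq
  have hfix : B *ᵥ q = q := by
    by_contra hne
    have hd : ∀ i, 0 < (P *ᵥ (B *ᵥ q - q)) i :=
      mulVec_pos_of_pos hN (sub_nonneg.2 hqB) (sub_ne_zero.2 hne)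
    have hp : ∀ i, 0 < (P *ᵥ q) i := mulVec_pos_of_pos hN hq0 hq
    obtain ⟨ε, hε, hεd⟩ := Pi.exists_forall_pos_add_lt
      (x := 0) (y := fun i => (P *ᵥ (B *ᵥ q - q)) i / (P *ᵥ q) i) fun i => div_pos (hd i) (hp i)
    have hPd : P *ᵥ (B *ᵥ q - q) = B *ᵥ (P *ᵥ q) - P *ᵥ q := by
      rw [mulVec_sub, mulVec_mulVec, mulVec_mulVec, hBP]
    have hgrow : (1 + ε) • (P *ᵥ q) ≤ B *ᵥ (P *ᵥ q) := fun i => by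
      have := (lt_div_iff₀ (hp i)).1 (by simpa using hεd i)
      rw [hPd] at this
      simp only [Pi.smul_apply, Pi.sub_apply, smul_eq_mul] at this ⊢
      linarith
    have := ofReal_le_spectralRadius_map_of_smul_le_mulVec hB (by positivity)
      (fun i => (hp i).le) (fun h => (hp (Classical.arbitrary n)).ne' (congrFun h _)) hgrow
    rw [hρ, ENNReal.ofReal_le_one] at this
    linarith
  exact ⟨P *ᵥ q, mulVec_pos_of_pos hN hq0 hq, by rw [mulVec_mulVec, hBP, ← mulVec_mulVec, hfix]⟩

end Matrix

section Renewal

variable {V E : Type*} [DecidableEq V] [Fintype E] {src tgt : E → V} {w ℓ : E → ℝ}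

variable (src tgt) in
/-- For `w e = r e ^ D` this is the real matrix `A(D)` of the Mauldin–Williams graph. -/
def weightMatrix (w : E → ℝ) : Matrix V V ℝ :=
  Matrix.of fun u v => ∑ e ∈ univ.filter (fun e => src e = u ∧ tgt e = v), w e

theorem weightMatrix_nonneg (hw : ∀ e, 0 ≤ w e) (u v : V) : 0 ≤ weightMatrix src tgt w u v :=
  sum_nonneg fun e _ => hw e

theorem weightMatrix_pos (hw : ∀ e, 0 < w e) {e : E} : 0 < weightMatrix src tgt w (src e) (tgt e) :=
  sum_pos' (fun e _ => (hw e).le) ⟨e, by simp, hw e⟩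

variable [Fintype V]

variable (src tgt) in
def renewalSum (w ℓ : E → ℝ) (f : V → ℝ → ℝ) (u : V) (x : ℝ) : ℝ :=
  ∑ v, ∑ e ∈ univ.filter (fun e => src e = u ∧ tgt e = v), w e * f v (x - ℓ e)

theorem abs_renewalSum_le {p : V → ℝ} {f : V → ℝ → ℝ} {δ K x : ℝ} (hw : ∀ e, 0 ≤ w e)
    (hℓ : ∀ e, δ ≤ ℓ e) (hp : weightMatrix src tgt w *ᵥ p = p)
    (hf : ∀ v y, y ≤ x - δ → |f v y| ≤ p v * K) (u : V) :
    |renewalSum src tgt w ℓ f u x| ≤ p u * K := by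
  calc |renewalSum src tgt w ℓ f u x|
      ≤ ∑ v, ∑ e ∈ univ.filter (fun e => src e = u ∧ tgt e = v), w e * (p v * K) := by
        refine (abs_sum_le_sum_abs _ _).trans (sum_le_sum fun v _ => ?_)
        refine (abs_sum_le_sum_abs _ _).trans (sum_le_sum fun e _ => ?_)
        rw [abs_mul, abs_of_nonneg (hw e)]
        exact mul_le_mul_of_nonneg_left (hf v _ (by linarith [hℓ e])) (hw e)
    _ = (weightMatrix src tgt w *ᵥ p) u * K := by
        simp only [Matrix.mulVec, dotProduct, weightMatrix, Matrix.of_apply, sum_mul, mul_assoc]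
    _ = p u * K := by rw [hp]

theorem abs_le_mul_one_add_sum_of_renewal {h ψ : V → ℝ → ℝ} {p : V → ℝ} {g : ℝ → ℝ} {b : ℕ → ℝ}
    {X δ : ℝ} (hw : ∀ e, 0 ≤ w e) (hℓ : ∀ e, δ ≤ ℓ e) (hp1 : ∀ u, 1 ≤ p u)
    (hp : weightMatrix src tgt w *ᵥ p = p)
    (heq : ∀ u x, h u x = renewalSum src tgt w ℓ h u x + ψ u x)
    (hψ : ∀ u x, |ψ u x| ≤ g x) (hb : ∀ n, 0 ≤ b n)
    (hg : ∀ n : ℕ, ∀ x, X + n * δ < x → x ≤ X + (n + 1) * δ → g x ≤ b n)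
    (hX : ∀ u x, x ≤ X → |h u x| ≤ 1) (n : ℕ) :
    ∀ u x, x ≤ X + n * δ → |h u x| ≤ p u * (1 + ∑ k ∈ range n, b k) := by
  induction n with
  | zero => simpa using fun u x hx => (hX u x hx).trans (hp1 u)
  | succ n ih =>
    intro u x hx
    rw [sum_range_succ, ← add_assoc]
    rcases le_or_gt x (X + n * δ) with hle | hlt
    · exact (ih u x hle).trans
        (mul_le_mul_of_nonneg_left (by linarith [hb n]) (by linarith [hp1 u]))
    · push_cast at hx
      calc |h u x| ≤ |renewalSum src tgt w ℓ h u x| + |ψ u x| := heq u x ▸ abs_add_le _ _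
        _ ≤ p u * (1 + ∑ k ∈ range n, b k) + b n :=
          add_le_add (abs_renewalSum_le hw hℓ hp (fun v y hy => ih v y (by linarith)) u)
            ((hψ u x).trans (hg n x hlt (by linarith)))
        _ ≤ p u * (1 + ∑ k ∈ range n, b k + b n) := by nlinarith [hp1 u, hb n]

theorem exp_neg_mul_abs_le {τ : ℝ} (hτ : 0 ≤ τ) (x a : ℝ) :
    Real.exp (-τ * |x|) ≤ Real.exp (τ * |x - a|) * Real.exp (-τ * |a|) := by
  rw [← Real.exp_add, Real.exp_le_exp]
  nlinarith [abs_sub_abs_le_abs_sub a x, abs_sub_comm x a]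

theorem summable_exp_neg_mul_abs_add_mul {τ δ : ℝ} (hτ : 0 < τ) (hδ : 0 < δ) (X : ℝ) :
    Summable fun n : ℕ => Real.exp (-τ * |X + n * δ|) := by
  have hq : Real.exp (-τ * δ) < 1 := Real.exp_lt_one_iff.2 (by nlinarith)
  refine .of_nonneg_of_le (fun n => (Real.exp_pos _).le) (fun n => ?_)
    ((summable_geometric_of_lt_one (Real.exp_pos _).le hq).mul_left (Real.exp (τ * |X|)))
  calc Real.exp (-τ * |X + n * δ|)
      ≤ Real.exp (τ * |X + n * δ - n * δ|) * Real.exp (-τ * |n * δ|) :=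
        exp_neg_mul_abs_le hτ.le _ _
    _ = Real.exp (τ * |X|) * Real.exp (-τ * δ) ^ n := by
        rw [add_sub_cancel_right, abs_of_nonneg (by positivity : (0 : ℝ) ≤ n * δ),
          ← Real.exp_nat_mul]
        ring_nf

theorem exists_abs_le_of_renewal {h ψ : V → ℝ → ℝ} {p : V → ℝ} {M τ : ℝ}
    (hw : ∀ e, 0 ≤ w e) (hℓ : ∀ e, 0 < ℓ e) (hp : ∀ u, 0 < p u)
    (hpw : weightMatrix src tgt w *ᵥ p = p) (hM : 0 ≤ M) (hτ : 0 < τ)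
    (hψ : ∀ u x, |ψ u x| ≤ M * Real.exp (-τ * |x|))
    (heq : ∀ u x, h u x = renewalSum src tgt w ℓ h u x + ψ u x)
    (hlim : ∀ u, Tendsto (h u) atBot (𝓝 0)) :
    ∀ u, ∃ C, ∀ x, |h u x| ≤ C := by
  obtain ⟨δ, hδ, hδℓ⟩ := Pi.exists_forall_pos_add_lt (x := 0) hℓ
  obtain ⟨c, hc, hcp⟩ := Pi.exists_forall_pos_add_lt (x := 0) hp
  have hp1 : ∀ u, 1 ≤ (c⁻¹ • p) u := fun u => by
    simpa [le_inv_mul_iff₀ hc] using (hcp u).le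
  have hpw' : weightMatrix src tgt w *ᵥ (c⁻¹ • p) = c⁻¹ • p := by rw [Matrix.mulVec_smul, hpw]
  obtain ⟨X, hX⟩ : ∃ X, ∀ x ≤ X, ∀ u, |h u x| ≤ 1 := eventually_atBot.1 <|
    eventually_all.2 fun u => (hlim u).eventually (Metric.closedBall_mem_nhds _ one_pos) |>.mono
      fun x hx => by simpa using hx
  set b : ℕ → ℝ := fun n => M * Real.exp (τ * δ) * Real.exp (-τ * |X + n * δ|)
  have hb : Summable b := (summable_exp_neg_mul_abs_add_mul hτ hδ X).mul_left _
  have hψb (n : ℕ) (x : ℝ) (hlo : X + n * δ < x) (hhi : x ≤ X + (n + 1) * δ) :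
      M * Real.exp (-τ * |x|) ≤ b n :=
    calc M * Real.exp (-τ * |x|)
        ≤ M * (Real.exp (τ * |x - (X + n * δ)|) * Real.exp (-τ * |X + n * δ|)) :=
          mul_le_mul_of_nonneg_left (exp_neg_mul_abs_le hτ.le _ _) hM
      _ ≤ M * Real.exp (τ * δ) * Real.exp (-τ * |X + n * δ|) := by
          rw [← mul_assoc]
          gcongr
          exact abs_le.2 ⟨by linarith, by linarith⟩
  have hstrip := abs_le_mul_one_add_sum_of_renewal hw (fun e => by simpa using (hδℓ e).le) hp1 hpw'
    heq hψ (fun n => by positivity) hψb fun u x hx => hX x hx u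
  intro u
  refine ⟨(c⁻¹ • p) u * (1 + ∑' n, b n), fun x => ?_⟩
  obtain ⟨n, hn⟩ := exists_nat_ge ((x - X) / δ)
  refine (hstrip n u x (by linarith [(div_le_iff₀ hδ).1 hn])).trans ?_
  gcongr
  · linarith [hp1 u]
  · exact hb.sum_le_tsum _ fun n _ => by positivity

end Renewal

theorem renewal_lemma_bounded_general
    {V : Type*} [Fintype V] [DecidableEq V] [Nonempty V] {E : Type*} [Fintype E]
    (src tgt : E → V) (r : E → ℝ) (hr : ∀ e, 0 < r e ∧ r e < 1)
    (hconn : ∀ u v : V, Relation.ReflTransGen (fun a b => ∃ e, src e = a ∧ tgt e = b) u v)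
    (D : ℝ)
    (A : Matrix V V ℂ)
    (hA : ∀ u v, A u v =
      ∑ e ∈ univ.filter (fun e => src e = u ∧ tgt e = v), ((r e : ℂ) ^ (D : ℂ)))
    (hρ : spectralRadius ℂ A = 1)
    (h ψ : V → ℝ → ℝ) (M τ : ℝ) (hM : 0 < M) (hτ : 0 < τ)
    (hψ : ∀ u x, |ψ u x| ≤ M * Real.exp (-τ * |x|))
    (heq : ∀ u x, h u x =
      (∑ v, ∑ e ∈ univ.filter (fun e => src e = u ∧ tgt e = v),
        r e ^ D * h v (x - Real.log (1 / r e))) + ψ u x)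
    (hlim : ∀ u, Tendsto (h u) atBot (𝓝 0)) :
    ∀ u, ∃ C : ℝ, ∀ x, |h u x| ≤ C := by
  have hw : ∀ e, 0 < r e ^ D := fun e => Real.rpow_pos_of_pos (hr e).1 D
  set B := weightMatrix src tgt fun e => r e ^ D
  have hB : ∀ u v, 0 ≤ B u v := weightMatrix_nonneg fun e => (hw e).le
  have hAB : A = B.map ((↑) : ℝ → ℂ) := by
    ext u v
    simp only [hA, B, weightMatrix, Matrix.map_apply, Matrix.of_apply, Complex.ofReal_sum,
      Complex.ofReal_cpow (hr _).1.le]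
  have hirr : ∀ u v, ∃ k, 0 < (B ^ k) u v := fun u v =>
    Matrix.exists_pow_apply_pos_of_reflTransGen hB <| Relation.ReflTransGen.mono
      (fun _ _ ⟨_, hsrc, htgt⟩ => hsrc ▸ htgt ▸ weightMatrix_pos hw) _ _ (hconn u v)
  obtain ⟨p, hp, hpB⟩ :=
    Matrix.exists_pos_mulVec_eq_self_of_spectralRadius_eq_one hB hirr (hAB ▸ hρ)
  exact exists_abs_le_of_renewal (fun e => (hw e).le)
    (fun e => Real.log_pos (one_lt_one_div (hr e).1 (hr e).2)) hp hpB hM.le hτ hψ heq hlim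

/-- Multi-dimensional renewal lemma: for a strongly connected Mauldin–Williams graph with
sim-value `D` (spectral radius of `A(D)` equals `1`), if functions `h_u` satisfy the
system of renewal equations with forcing terms `ψ_u` decaying like `e^{-τ|x|}` and each
`h_u → 0` as `x → -∞`, then each `h_u` is bounded on `ℝ`. -/
theorem renewal_lemma_bounded
    {V : Type*} [Fintype V] [DecidableEq V] [Nonempty V] {E : Type*} [Fintype E]
    (src tgt : E → V) (r : E → ℝ) (hr : ∀ e, 0 < r e ∧ r e < 1)
    (hout : ∀ u : V, ∃ e, src e = u)
    (hconn : ∀ u v : V, Relation.ReflTransGen (fun a b => ∃ e, src e = a ∧ tgt e = b) u v)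
    (D : ℝ) (hD : 0 ≤ D)
    (A : Matrix V V ℂ)
    (hA : ∀ u v, A u v =
      ∑ e ∈ univ.filter (fun e => src e = u ∧ tgt e = v), ((r e : ℂ) ^ (D : ℂ)))
    (hρ : spectralRadius ℂ A = 1)
    (h ψ : V → ℝ → ℝ) (M τ : ℝ) (hM : 0 < M) (hτ : 0 < τ)
    (hψ : ∀ u x, |ψ u x| ≤ M * Real.exp (-τ * |x|))
    (heq : ∀ u x, h u x =
      (∑ v, ∑ e ∈ univ.filter (fun e => src e = u ∧ tgt e = v),
        r e ^ D * h v (x - Real.log (1 / r e))) + ψ u x)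
    (hlim : ∀ u, Tendsto (h u) atBot (𝓝 0)) :
    ∀ u, ∃ C : ℝ, ∀ x, |h u x| ≤ C :=
  renewal_lemma_bounded_general src tgt r hr hconn D A hA hρ h ψ M τ hM hτ hψ heq hlim
end

section
/- With the notation of the renewal lemma: if |h_u(x)| ≤ p_u for all x ≤ x₀ and all u, and |ψ_u(x)| ≤ p_u M e^{−τ|x|}, then for every k ≥ 0 and all x ≤ x₀ + (k+1)γ one has |h_u(x)| ≤ p_u (1 + M Σ_{j=0}^{k} sup_{y ∈ [x₀+jγ, x₀+(j+1)γ]} e^{−τ|y|}), where γ = min_e log(1/r_e). -/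
/-!
Every edge shifts the argument back by at least `γ`, so one application of the renewal equation
turns a bound `|h_v| ≤ c p_v` on `(-∞, X]` into a bound on `(-∞, X + γ]`: the Perron–Frobenius
relation reassembles the weighted sum of the old bounds into exactly `c p_u`, and the forcing
term adds at most `p_u M sup_{[X, X+γ]} e^{-τ|y|}`. Iterating from `x₀` gives the claim.
-/

open Finset

section RenewalEquation

variable {V E : Type*} [Fintype V] [DecidableEq V] [Fintype E] (src tgt : E → V)

theorem abs_sum_edges_le_of_eigenvector (w : E → ℝ) (hw : ∀ e, 0 ≤ w e) (p : V → ℝ) (u : V)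
    (hpu : p u = ∑ v, ∑ e ∈ univ.filter (fun e => src e = u ∧ tgt e = v), w e * p v)
    (f : V → E → ℝ) (c : ℝ) (hf : ∀ v e, |f v e| ≤ p v * c) :
    |∑ v, ∑ e ∈ univ.filter (fun e => src e = u ∧ tgt e = v), w e * f v e| ≤ p u * c :=
  calc |∑ v, ∑ e ∈ univ.filter (fun e => src e = u ∧ tgt e = v), w e * f v e|
      ≤ ∑ v, ∑ e ∈ univ.filter (fun e => src e = u ∧ tgt e = v), w e * (p v * c) := by
        refine (abs_sum_le_sum_abs _ _).trans (sum_le_sum fun v _ => ?_)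
        refine (abs_sum_le_sum_abs _ _).trans (sum_le_sum fun e _ => ?_)
        rw [abs_mul, abs_of_nonneg (hw e)]
        exact mul_le_mul_of_nonneg_left (hf v e) (hw e)
    _ = p u * c := by rw [hpu]; simp only [sum_mul, mul_assoc]

theorem renewal_abs_le_of_abs_le_on_Iic (w ℓ : E → ℝ) (hw : ∀ e, 0 ≤ w e) (p : V → ℝ)
    (hp : ∀ u, 0 ≤ p u)
    (hperron : ∀ u, p u = ∑ v, ∑ e ∈ univ.filter (fun e => src e = u ∧ tgt e = v), w e * p v)
    (h ψ : V → ℝ → ℝ) (M : ℝ) (hM : 0 ≤ M) (g : ℝ → ℝ) (hg : Continuous g)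
    (hg0 : ∀ y, 0 ≤ g y) (hψ : ∀ u x, |ψ u x| ≤ p u * M * g x)
    (heq : ∀ u x, h u x =
      (∑ v, ∑ e ∈ univ.filter (fun e => src e = u ∧ tgt e = v), w e * h v (x - ℓ e)) + ψ u x)
    {γ : ℝ} (hℓ : ∀ e, γ ≤ ℓ e) {X Y c : ℝ} (hY : Y ≤ X + γ)
    (hX : ∀ v, ∀ y ≤ X, |h v y| ≤ p v * c) :
    ∀ u, ∀ x ≤ Y, |h u x| ≤ p u * (c + M * sSup (g '' Set.Icc X Y)) := by
  intro u x hx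
  have hsup_nonneg : 0 ≤ sSup (g '' Set.Icc X Y) :=
    Real.sSup_nonneg (by rintro _ ⟨y, -, rfl⟩; exact hg0 y)
  have hpM : 0 ≤ p u * M := mul_nonneg (hp u) hM
  rcases le_or_gt x X with hxX | hXx
  · calc |h u x| ≤ p u * c := hX u x hxX
      _ ≤ p u * (c + M * sSup (g '' Set.Icc X Y)) :=
        mul_le_mul_of_nonneg_left (le_add_of_nonneg_right (mul_nonneg hM hsup_nonneg)) (hp u)
  · have hsum := abs_sum_edges_le_of_eigenvector src tgt w hw p u (hperron u)
      (fun v e => h v (x - ℓ e)) c (fun v e => hX v _ (by linarith [hℓ e]))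
    have hgx : g x ≤ sSup (g '' Set.Icc X Y) :=
      le_csSup (isCompact_Icc.bddAbove_image hg.continuousOn) ⟨x, ⟨hXx.le, hx⟩, rfl⟩
    rw [heq u x]
    calc _ ≤ p u * c + p u * M * g x := (abs_add_le _ _).trans (add_le_add hsum (hψ u x))
      _ ≤ p u * (c + M * sSup (g '' Set.Icc X Y)) := by
        nlinarith [mul_le_mul_of_nonneg_left hgx hpM]

end RenewalEquation

theorem renewal_inductive_bound_general
    {V : Type*} [Fintype V] [DecidableEq V] {E : Type*} [Fintype E]
    (src tgt : E → V) (r : E → ℝ) (hr : ∀ e, 0 < r e ∧ r e < 1)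
    (D : ℝ)
    (p : V → ℝ) (hp : ∀ u, 0 < p u)
    (hperron : ∀ u, p u = ∑ v, ∑ e ∈ univ.filter (fun e => src e = u ∧ tgt e = v),
      r e ^ D * p v)
    (h ψ : V → ℝ → ℝ) (M τ : ℝ) (hM : 0 < M)
    (hψ : ∀ u x, |ψ u x| ≤ p u * M * Real.exp (-τ * |x|))
    (heq : ∀ u x, h u x =
      (∑ v, ∑ e ∈ univ.filter (fun e => src e = u ∧ tgt e = v),
        r e ^ D * h v (x - Real.log (1 / r e))) + ψ u x)
    (γ : ℝ) (hγ : IsLeast ((fun e => Real.log (1 / r e)) '' Set.univ) γ)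
    (x₀ : ℝ) (hinit : ∀ u, ∀ x ≤ x₀, |h u x| ≤ p u) :
    ∀ k : ℕ, ∀ u, ∀ x ≤ x₀ + (k + 1) * γ,
      |h u x| ≤ p u * (1 + M * ∑ j ∈ Finset.range (k + 1),
        sSup ((fun y => Real.exp (-τ * |y|)) ''
          Set.Icc (x₀ + j * γ) (x₀ + (j + 1) * γ))) := by
  have bound : ∀ n : ℕ, ∀ u, ∀ x ≤ x₀ + n * γ, |h u x| ≤ p u * (1 + M *
      ∑ j ∈ range n, sSup ((fun y => Real.exp (-τ * |y|)) ''
        Set.Icc (x₀ + j * γ) (x₀ + (j + 1) * γ))) := by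
    intro n
    induction n with
    | zero => simpa using hinit
    | succ n ih =>
      rw [sum_range_succ, mul_add, ← add_assoc]
      push_cast
      exact renewal_abs_le_of_abs_le_on_Iic src tgt (fun e => r e ^ D)
        (fun e => Real.log (1 / r e)) (fun e => Real.rpow_nonneg (hr e).1.le D) p
        (fun u => (hp u).le) hperron h ψ M hM.le (fun y => Real.exp (-τ * |y|)) (by fun_prop)
        (fun y => (Real.exp_pos _).le) hψ heq (fun e => hγ.2 ⟨e, trivial, rfl⟩)
        (by linarith) ih
  intro k
  exact_mod_cast bound (k + 1)

/-- The inductive bound from the proof of the renewal lemma: if `|h_u(x)| ≤ p_u` for all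
`x ≤ x₀`, and `|ψ_u(x)| ≤ p_u M e^{-τ|x|}`, then for every `k` and all
`x ≤ x₀ + (k+1)γ`,
`|h_u(x)| ≤ p_u (1 + M ∑_{j=0}^{k} sup_{y ∈ [x₀+jγ, x₀+(j+1)γ]} e^{-τ|y|})`,
where `γ = min_e log(1/r_e)` and `p` is the Perron–Frobenius eigenvector. -/
theorem renewal_inductive_bound
    {V : Type*} [Fintype V] [DecidableEq V] [Nonempty V] {E : Type*} [Fintype E]
    [Nonempty E]
    (src tgt : E → V) (r : E → ℝ) (hr : ∀ e, 0 < r e ∧ r e < 1)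
    (D : ℝ) (hD : 0 ≤ D)
    (p : V → ℝ) (hp : ∀ u, 0 < p u)
    (hperron : ∀ u, p u = ∑ v, ∑ e ∈ univ.filter (fun e => src e = u ∧ tgt e = v),
      r e ^ D * p v)
    (h ψ : V → ℝ → ℝ) (M τ : ℝ) (hM : 0 < M) (hτ : 0 < τ)
    (hψ : ∀ u x, |ψ u x| ≤ p u * M * Real.exp (-τ * |x|))
    (heq : ∀ u x, h u x =
      (∑ v, ∑ e ∈ univ.filter (fun e => src e = u ∧ tgt e = v),
        r e ^ D * h v (x - Real.log (1 / r e))) + ψ u x)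
    (γ : ℝ) (hγ : IsLeast ((fun e => Real.log (1 / r e)) '' Set.univ) γ)
    (x₀ : ℝ) (hinit : ∀ u, ∀ x ≤ x₀, |h u x| ≤ p u) :
    ∀ k : ℕ, ∀ u, ∀ x ≤ x₀ + (k + 1) * γ,
      |h u x| ≤ p u * (1 + M * ∑ j ∈ Finset.range (k + 1),
        sSup ((fun y => Real.exp (-τ * |y|)) ''
          Set.Icc (x₀ + j * γ) (x₀ + (j + 1) * γ))) :=
  renewal_inductive_bound_general src tgt r hr D p hp hperron h ψ M τ hM hψ heq γ hγ x₀ hinit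
end

section
/- Let A(s) be the Mauldin–Williams matrix of a graph with N vertices and weights r_e ∈ (0,1), and let r_min = min_e r_e. Then each entry of adj(I − A(s)) is an exponential polynomial of the form ε(uv) + Σ_α p_α^s − Σ_β q_β^s where ε(uv) ∈ {0,1} and each p_α, q_β is a product of at most N−1 of the weights r_e; consequently, for Re(s) ≤ c_l < 0, |adj(I − A(s))_{uv}| ≤ C′ r_min^{(N−1) Re(s)} for some constant C′ depending only on the graph and c_l. -/
open Finset

/-! Each entry of `I - A(s)` is `δ_uv - ∑ r_e^s`, an exponential polynomial whose bases are single
weights. Such exponential polynomials with bases products of weights are closed under sums and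
products, the number of factors in a base adding under products since `(ab)^s = a^s b^s` for
`a, b ≥ 0`. An adjugate entry is the determinant of `I - A(s)` with one row replaced by a unit
vector, so each of its terms is a product of `N - 1` entries of `I - A(s)` and one constant.
For `Re s ≤ 0` the bound follows from `p ≥ r_min^(N-1)` for every such base `p`. -/

section WeightExpPoly

variable {E : Type*} (r : E → ℝ)

def weightProd (ms : Multiset E) : ℝ := (ms.map r).prod

/-- A constant term `1` is the base `weightProd r 0 = 1`. -/
def IsWeightExpPoly (k : ℕ) (f : ℂ → ℂ) : Prop :=
  ∃ (ι κ : Type) (_ : Fintype ι) (_ : Fintype κ) (P : ι → Multiset E) (Q : κ → Multiset E),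
    (∀ i, Multiset.card (P i) ≤ k) ∧ (∀ j, Multiset.card (Q j) ≤ k) ∧
    ∀ s, f s = ∑ i, (weightProd r (P i) : ℂ) ^ s - ∑ j, (weightProd r (Q j) : ℂ) ^ s

variable {r}

lemma weightProd_add (a b : Multiset E) :
    weightProd r (a + b) = weightProd r a * weightProd r b := by
  simp only [weightProd, Multiset.map_add, Multiset.prod_add]

lemma weightProd_nonneg (hr : ∀ e, 0 ≤ r e) (ms : Multiset E) : 0 ≤ weightProd r ms :=
  Multiset.prod_nonneg fun _ hx => by
    obtain ⟨e, -, rfl⟩ := Multiset.mem_map.1 hx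
    exact hr e

lemma pow_card_le_weightProd {ρ : ℝ} (hρ : 0 ≤ ρ) (hρr : ∀ e, ρ ≤ r e) (ms : Multiset E) :
    ρ ^ Multiset.card ms ≤ weightProd r ms := by
  induction ms using Multiset.induction_on with
  | empty => simp [weightProd]
  | cons e ms ih =>
    rw [Multiset.card_cons, pow_succ', ← Multiset.singleton_add, weightProd_add]
    simp only [weightProd, Multiset.map_singleton, Multiset.prod_singleton] at ih ⊢
    exact mul_le_mul (hρr e) ih (pow_nonneg hρ _) (hρ.trans (hρr e))

lemma cpow_weightProd_add (hr : ∀ e, 0 ≤ r e) (a b : Multiset E) (s : ℂ) :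
    (weightProd r (a + b) : ℂ) ^ s = (weightProd r a : ℂ) ^ s * (weightProd r b : ℂ) ^ s := by
  rw [weightProd_add, Complex.ofReal_mul]
  exact Complex.mul_cpow_ofReal_nonneg (weightProd_nonneg hr a) (weightProd_nonneg hr b) s

lemma isWeightExpPoly_cpow_weightProd {k : ℕ} {ms : Multiset E} (h : Multiset.card ms ≤ k) :
    IsWeightExpPoly r k fun s => (weightProd r ms : ℂ) ^ s :=
  ⟨Unit, Empty, inferInstance, inferInstance, fun _ => ms, Empty.elim, fun _ => h,
    fun j => j.elim, fun s => by simp⟩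

lemma isWeightExpPoly_zero (k : ℕ) : IsWeightExpPoly r k 0 :=
  ⟨Empty, Empty, inferInstance, inferInstance, Empty.elim, Empty.elim, fun i => i.elim,
    fun j => j.elim, fun s => by simp⟩

lemma isWeightExpPoly_one (k : ℕ) : IsWeightExpPoly r k 1 := by
  convert isWeightExpPoly_cpow_weightProd (r := r) (Nat.zero_le k) (ms := 0) with s
  simp [weightProd]

namespace IsWeightExpPoly

variable {k k' : ℕ} {f g : ℂ → ℂ}

lemma congr (hf : IsWeightExpPoly r k f) (h : ∀ s, f s = g s) : IsWeightExpPoly r k g := by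
  obtain ⟨ι, κ, _, _, P, Q, hP, hQ, hf⟩ := hf
  exact ⟨ι, κ, _, _, P, Q, hP, hQ, fun s => (h s).symm.trans (hf s)⟩

lemma mono (hf : IsWeightExpPoly r k f) (hk : k ≤ k') : IsWeightExpPoly r k' f := by
  obtain ⟨ι, κ, _, _, P, Q, hP, hQ, hf⟩ := hf
  exact ⟨ι, κ, _, _, P, Q, fun i => (hP i).trans hk, fun j => (hQ j).trans hk, hf⟩

lemma neg (hf : IsWeightExpPoly r k f) : IsWeightExpPoly r k (-f) := by
  obtain ⟨ι, κ, _, _, P, Q, hP, hQ, hf⟩ := hf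
  exact ⟨κ, ι, _, _, Q, P, hQ, hP, fun s => by rw [Pi.neg_apply, hf, neg_sub]⟩

lemma add (hf : IsWeightExpPoly r k f) (hg : IsWeightExpPoly r k g) :
    IsWeightExpPoly r k (f + g) := by
  obtain ⟨ι, κ, _, _, P, Q, hP, hQ, hf⟩ := hf
  obtain ⟨ι', κ', _, _, P', Q', hP', hQ', hg⟩ := hg
  refine ⟨ι ⊕ ι', κ ⊕ κ', inferInstance, inferInstance, Sum.elim P P', Sum.elim Q Q',
    ?_, ?_, fun s => ?_⟩
  · rintro (i | i) <;> simp [hP, hP']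
  · rintro (j | j) <;> simp [hQ, hQ']
  · simp only [Pi.add_apply, hf, hg, Fintype.sum_sum_type, Sum.elim_inl, Sum.elim_inr]
    ring

lemma sub (hf : IsWeightExpPoly r k f) (hg : IsWeightExpPoly r k g) :
    IsWeightExpPoly r k (f - g) :=
  sub_eq_add_neg f g ▸ hf.add hg.neg

lemma units_zsmul (hf : IsWeightExpPoly r k f) (z : ℤˣ) :
    IsWeightExpPoly r k fun s => z • f s := by
  rcases Int.units_eq_one_or z with rfl | rfl
  · simpa using hf
  · exact hf.neg.congr fun s => by simp

lemma mul (hr : ∀ e, 0 ≤ r e) (hf : IsWeightExpPoly r k f) (hg : IsWeightExpPoly r k' g) :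
    IsWeightExpPoly r (k + k') (f * g) := by
  obtain ⟨ι, κ, _, _, P, Q, hP, hQ, hf⟩ := hf
  obtain ⟨ι', κ', _, _, P', Q', hP', hQ', hg⟩ := hg
  refine ⟨ι × ι' ⊕ κ × κ', ι × κ' ⊕ κ × ι', inferInstance, inferInstance,
    Sum.elim (fun x => P x.1 + P' x.2) (fun x => Q x.1 + Q' x.2),
    Sum.elim (fun x => P x.1 + Q' x.2) (fun x => Q x.1 + P' x.2), ?_, ?_, fun s => ?_⟩
  · rintro (x | x) <;> simpa using add_le_add (by simp [hP, hQ]) (by simp [hP', hQ'])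
  · rintro (x | x) <;> simpa using add_le_add (by simp [hP, hQ]) (by simp [hP', hQ'])
  · simp only [Pi.mul_apply, hf, hg, Fintype.sum_sum_type, Sum.elim_inl, Sum.elim_inr,
      Fintype.sum_prod_type, cpow_weightProd_add hr, ← Finset.sum_mul_sum]
    ring

lemma sum {α : Type*} {t : Finset α} {g : α → ℂ → ℂ}
    (h : ∀ a ∈ t, IsWeightExpPoly r k (g a)) :
    IsWeightExpPoly r k fun s => ∑ a ∈ t, g a s := by
  classical
  induction t using Finset.induction_on with
  | empty => exact (isWeightExpPoly_zero k).congr fun s => by simp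
  | insert a t ha ih =>
    simp only [Finset.sum_insert ha]
    exact (h a (mem_insert_self a t)).add (ih fun b hb => h b (mem_insert_of_mem hb))

lemma prod (hr : ∀ e, 0 ≤ r e) {α : Type*} {t : Finset α} {d : α → ℕ} {g : α → ℂ → ℂ}
    (h : ∀ a ∈ t, IsWeightExpPoly r (d a) (g a)) :
    IsWeightExpPoly r (∑ a ∈ t, d a) fun s => ∏ a ∈ t, g a s := by
  classical
  induction t using Finset.induction_on with
  | empty => exact (isWeightExpPoly_one 0).congr fun s => by simp
  | insert a t ha ih =>
    simp only [Finset.sum_insert ha, Finset.prod_insert ha]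
    exact (h a (mem_insert_self a t)).mul hr (ih fun b hb => h b (mem_insert_of_mem hb))

lemma det (hr : ∀ e, 0 ≤ r e) {n : Type*} [Fintype n] [DecidableEq n]
    {M : ℂ → Matrix n n ℂ} (d : n → ℕ) (h : ∀ i j, IsWeightExpPoly r (d i) fun s => M s i j) :
    IsWeightExpPoly r (∑ i, d i) fun s => (M s).det := by
  refine (sum fun σ _ => ?_).congr fun s => (Matrix.det_apply (M s)).symm
  have hσ := (IsWeightExpPoly.prod (t := univ) hr fun i _ => h (σ i) i).units_zsmul
    (Equiv.Perm.sign σ)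
  exact hσ.mono (Equiv.sum_comp σ d).le

lemma adjugate (hr : ∀ e, 0 ≤ r e) {n : Type*} [Fintype n] [DecidableEq n]
    {M : ℂ → Matrix n n ℂ} (h : ∀ i j, IsWeightExpPoly r 1 fun s => M s i j) (u v : n) :
    IsWeightExpPoly r (Fintype.card n - 1) fun s => (M s).adjugate u v := by
  have hdeg : ∑ i, (if i = v then 0 else 1) = Fintype.card n - 1 := by
    simp [Finset.sum_ite, Finset.filter_ne', Finset.card_erase_of_mem]
  refine hdeg ▸ (det hr (fun i => if i = v then 0 else 1) fun i j => ?_).congr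
    fun s => (Matrix.adjugate_apply (M s) u v).symm
  by_cases hi : i = v
  · subst hi
    simp only [if_true, Matrix.updateRow_self, Pi.single_apply]
    split_ifs
    · exact isWeightExpPoly_one 0
    · exact isWeightExpPoly_zero 0
  · simpa [hi, Matrix.updateRow_ne hi] using h i j

lemma norm_cpow_weightProd_le {ρ : ℝ} (hρ : 0 < ρ) (hρ1 : ρ ≤ 1) (hρr : ∀ e, ρ ≤ r e)
    {ms : Multiset E} (hms : Multiset.card ms ≤ k) {s : ℂ} (hs : s.re ≤ 0) :
    ‖(weightProd r ms : ℂ) ^ s‖ ≤ ρ ^ (k * s.re) := by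
  have hρk : ρ ^ k ≤ weightProd r ms :=
    (pow_le_pow_of_le_one hρ.le hρ1 hms).trans (pow_card_le_weightProd hρ.le hρr ms)
  rw [Complex.norm_cpow_eq_rpow_re_of_pos ((pow_pos hρ k).trans_le hρk), Real.rpow_mul hρ.le,
    Real.rpow_natCast]
  exact Real.rpow_le_rpow_of_nonpos (pow_pos hρ k) hρk hs

lemma norm_le {ρ : ℝ} (hρ : 0 < ρ) (hρ1 : ρ ≤ 1) (hρr : ∀ e, ρ ≤ r e)
    (hf : IsWeightExpPoly r k f) :
    ∃ C, 0 < C ∧ ∀ s : ℂ, s.re ≤ 0 → ‖f s‖ ≤ C * ρ ^ (k * s.re) := by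
  obtain ⟨ι, κ, _, _, P, Q, hP, hQ, hf⟩ := hf
  refine ⟨Fintype.card ι + Fintype.card κ + 1, by positivity, fun s hs => ?_⟩
  have hsum : ∀ {α : Type} [Fintype α] (T : α → Multiset E), (∀ a, Multiset.card (T a) ≤ k) →
      ‖∑ a, (weightProd r (T a) : ℂ) ^ s‖ ≤ Fintype.card α * ρ ^ (k * s.re) := fun T hT => by
    simpa using norm_sum_le_of_le univ fun a _ => norm_cpow_weightProd_le hρ hρ1 hρr (hT a) hs
  have hR : 0 ≤ ρ ^ (k * s.re) := Real.rpow_nonneg hρ.le _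
  calc ‖f s‖ ≤ Fintype.card ι * ρ ^ (k * s.re) + Fintype.card κ * ρ ^ (k * s.re) := by
        rw [hf]; exact (norm_sub_le _ _).trans (add_le_add (hsum P hP) (hsum Q hQ))
    _ ≤ (Fintype.card ι + Fintype.card κ + 1) * ρ ^ (k * s.re) := by nlinarith

lemma exists_fin (hf : IsWeightExpPoly r k f) :
    ∃ (m l : ℕ) (p : Fin m → ℝ) (q : Fin l → ℝ),
      (∀ α, ∃ ms : Multiset E, Multiset.card ms ≤ k ∧ p α = (ms.map r).prod) ∧
      (∀ β, ∃ ms : Multiset E, Multiset.card ms ≤ k ∧ q β = (ms.map r).prod) ∧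
      ∀ s, f s = ∑ α, (p α : ℂ) ^ s - ∑ β, (q β : ℂ) ^ s := by
  obtain ⟨ι, κ, _, _, P, Q, hP, hQ, hf⟩ := hf
  let eι := Fintype.equivFin ι
  let eκ := Fintype.equivFin κ
  refine ⟨_, _, fun α => weightProd r (P (eι.symm α)), fun β => weightProd r (Q (eκ.symm β)),
    fun α => ⟨_, hP _, rfl⟩, fun β => ⟨_, hQ _, rfl⟩, fun s => ?_⟩
  rw [hf, eι.symm.sum_comp (fun i => (weightProd r (P i) : ℂ) ^ s),
    eκ.symm.sum_comp (fun j => (weightProd r (Q j) : ℂ) ^ s)]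

end IsWeightExpPoly

end WeightExpPoly

lemma isWeightExpPoly_one_sub_mauldinWilliams_apply {V E : Type*} [Fintype E] [DecidableEq V]
    {src tgt : E → V} {r : E → ℝ} {A : ℂ → Matrix V V ℂ}
    (hA : ∀ s u v, A s u v =
      ∑ e ∈ univ.filter (fun e => src e = u ∧ tgt e = v), (r e : ℂ) ^ s) (u v : V) :
    IsWeightExpPoly r 1 fun s => (1 - A s) u v := by
  have hconst : IsWeightExpPoly r 1 fun _ => (1 : Matrix V V ℂ) u v := by
    rw [Matrix.one_apply]
    split_ifs
    · exact isWeightExpPoly_one 1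
    · exact isWeightExpPoly_zero 1
  have hedge (e : E) : IsWeightExpPoly r 1 fun s => (r e : ℂ) ^ s :=
    (isWeightExpPoly_cpow_weightProd (ms := {e}) le_rfl).congr fun s => by simp [weightProd]
  have hedges := IsWeightExpPoly.sum (t := univ.filter fun e => src e = u ∧ tgt e = v)
    fun e _ => hedge e
  exact (hconst.sub hedges).congr fun s => by simp [hA]

theorem adjugate_MW_exponential_polynomial_general
    {V : Type*} [Fintype V] [DecidableEq V] {E : Type*} [Fintype E]
    (src tgt : E → V) (r : E → ℝ) (hr : ∀ e, 0 < r e ∧ r e < 1)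
    (A : ℂ → Matrix V V ℂ)
    (hA : ∀ s u v, A s u v =
      ∑ e ∈ univ.filter (fun e => src e = u ∧ tgt e = v), (r e : ℂ) ^ s)
    (rmin : ℝ) (hrmin : IsLeast (Set.range r) rmin) (u v : V) :
    (∃ c : ℂ, (c = 0 ∨ c = 1) ∧ ∃ (m l : ℕ) (p : Fin m → ℝ) (q : Fin l → ℝ),
      (∀ α, ∃ ms : Multiset E, ms.card ≤ Fintype.card V - 1 ∧ p α = (ms.map r).prod) ∧
      (∀ β, ∃ ms : Multiset E, ms.card ≤ Fintype.card V - 1 ∧ q β = (ms.map r).prod) ∧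
      (∀ s : ℂ, Matrix.adjugate (1 - A s) u v =
        c + (∑ α, (p α : ℂ) ^ s) - ∑ β, (q β : ℂ) ^ s)) ∧
    (∀ c_l : ℝ, c_l < 0 → ∃ C' : ℝ, 0 < C' ∧ ∀ s : ℂ, s.re ≤ c_l →
      ‖Matrix.adjugate (1 - A s) u v‖ ≤
        C' * rmin ^ (((Fintype.card V : ℝ) - 1) * s.re)) := by
  have hadj := IsWeightExpPoly.adjugate (fun e => (hr e).1.le)
    (isWeightExpPoly_one_sub_mauldinWilliams_apply hA) u v
  obtain ⟨⟨e₀, rfl⟩, hmin⟩ := hrmin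
  refine ⟨?_, fun c_l hc_l => ?_⟩
  · obtain ⟨m, l, p, q, hp, hq, hpq⟩ := hadj.exists_fin
    exact ⟨0, .inl rfl, m, l, p, q, hp, hq, fun s => by rw [hpq, zero_add]⟩
  · obtain ⟨C, hC, hbound⟩ := hadj.norm_le (hr e₀).1 (hr e₀).2.le fun e => hmin ⟨e, rfl⟩
    have hcard : ((Fintype.card V - 1 : ℕ) : ℝ) = Fintype.card V - 1 :=
      Nat.cast_pred (Fintype.card_pos_iff.2 ⟨u⟩)
    exact ⟨C, hC, fun s hs => hcard ▸ hbound s (hs.trans hc_l.le)⟩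

/-- Each entry of the adjugate of `I - A(s)` (where `A(s)` is the Mauldin–Williams
matrix of a graph with `N` vertices) is an exponential polynomial
`ε(uv) + ∑ p_α^s - ∑ q_β^s` with `ε(uv) ∈ {0,1}` and each base `p_α, q_β` a product of at
most `N - 1` of the weights; consequently, for `Re s ≤ c_l < 0`,
`|adj(I - A(s))_{uv}| ≤ C' · r_min^{(N-1) Re s}`. -/
theorem adjugate_MW_exponential_polynomial
    {V : Type*} [Fintype V] [DecidableEq V] [Nonempty V] {E : Type*} [Fintype E]
    [Nonempty E]
    (src tgt : E → V) (r : E → ℝ) (hr : ∀ e, 0 < r e ∧ r e < 1)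
    (A : ℂ → Matrix V V ℂ)
    (hA : ∀ s u v, A s u v =
      ∑ e ∈ univ.filter (fun e => src e = u ∧ tgt e = v), (r e : ℂ) ^ s)
    (rmin : ℝ) (hrmin : IsLeast (Set.range r) rmin) (u v : V) :
    (∃ c : ℂ, (c = 0 ∨ c = 1) ∧ ∃ (m l : ℕ) (p : Fin m → ℝ) (q : Fin l → ℝ),
      (∀ α, ∃ ms : Multiset E, ms.card ≤ Fintype.card V - 1 ∧ p α = (ms.map r).prod) ∧
      (∀ β, ∃ ms : Multiset E, ms.card ≤ Fintype.card V - 1 ∧ q β = (ms.map r).prod) ∧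
      (∀ s : ℂ, Matrix.adjugate (1 - A s) u v =
        c + (∑ α, (p α : ℂ) ^ s) - ∑ β, (q β : ℂ) ^ s)) ∧
    (∀ c_l : ℝ, c_l < 0 → ∃ C' : ℝ, 0 < C' ∧ ∀ s : ℂ, s.re ≤ c_l →
      ‖Matrix.adjugate (1 - A s) u v‖ ≤
        C' * rmin ^ (((Fintype.card V : ℝ) - 1) * s.re)) :=
  adjugate_MW_exponential_polynomial_general src tgt r hr A hA rmin hrmin u v
end

section
/- For the Mauldin–Williams matrix A(s) = [[0, 4·2^{−s}], [2^{−s}, 2^{−s} + 3·4^{−s}]], the unique real s ≥ 0 with spectral radius of A(s) equal to 1 is D = log₂((√29 + 1)/2), and the set of complex zeros of det(I − A(s)) equals {D + ikp : k ∈ ℤ} ∪ {log₂((√29 − 1)/2) + i(k + 1/2)p : k ∈ ℤ}, where p = 2π/ln 2. -/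
open Complex

private lemma sqrt29_sq : Real.sqrt 29 ^ 2 = 29 := Real.sq_sqrt (by norm_num)

private lemma sqrt29_gt : 5 < Real.sqrt 29 := by
  have := Real.sqrt_lt_sqrt (by norm_num : (0:ℝ) ≤ 25) (by norm_num : (25:ℝ) < 29)
  rwa [show Real.sqrt 25 = 5 by
    rw [show (25:ℝ) = 5^2 by norm_num, Real.sqrt_sq (by norm_num)]] at this

/-- `(√29+1)/2` is the inverse of `(√29-1)/14`. -/
private lemma inv_p : ((Real.sqrt 29 + 1)/2 : ℝ) = (((Real.sqrt 29 - 1)/14))⁻¹ := by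
  have h5 := sqrt29_gt
  have h : ((Real.sqrt 29 - 1)/14) * ((Real.sqrt 29 + 1)/2) = 1 := by
    nlinarith [sqrt29_sq]
  exact (inv_eq_of_mul_eq_one_right h).symm

/-- `(√29-1)/2` is the inverse of `(√29+1)/14`. -/
private lemma inv_m : ((Real.sqrt 29 - 1)/2 : ℝ) = (((Real.sqrt 29 + 1)/14))⁻¹ := by
  have h5 := sqrt29_gt
  have h : ((Real.sqrt 29 + 1)/14) * ((Real.sqrt 29 - 1)/2) = 1 := by
    nlinarith [sqrt29_sq]
  exact (inv_eq_of_mul_eq_one_right h).symm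

/-- Solving `exp(L·(-s)) = exp(c)` where `d·L = -c`, `p·L = 2π`. -/
private lemma exp_solve_pos (L lc dd pp : ℝ) (hL : L ≠ 0) (hdd : dd * L = -lc)
    (hpp : pp * L = 2 * Real.pi) (s : ℂ) :
    cexp ((L:ℂ) * (-s)) = cexp ((lc:ℂ)) ↔ ∃ k : ℤ, s = (dd:ℂ) + (k:ℂ) * pp * I := by
  rw [Complex.exp_eq_exp_iff_exists_int]
  have hLc : (L:ℂ) ≠ 0 := by exact_mod_cast hL
  have hdc : (dd:ℂ) * L = -(lc:ℂ) := by exact_mod_cast hdd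
  have hpc : (pp:ℂ) * L = 2 * (Real.pi:ℂ) := by exact_mod_cast hpp
  constructor
  · rintro ⟨n, hn⟩
    refine ⟨-n, mul_left_cancel₀ hLc ?_⟩
    push_cast
    linear_combination -hn - hdc + ((n:ℂ) * I) * hpc
  · rintro ⟨k, hk⟩
    refine ⟨-k, ?_⟩
    subst hk
    push_cast
    linear_combination -hdc + (-(k:ℂ) * I) * hpc

/-- Solving `exp(L·(-s)) = -exp(c)` where `d·L = -c`, `p·L = 2π`. -/
private lemma exp_solve_neg (L lm dd pp : ℝ) (hL : L ≠ 0) (hdd : dd * L = -lm)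
    (hpp : pp * L = 2 * Real.pi) (s : ℂ) :
    cexp ((L:ℂ) * (-s)) = -cexp ((lm:ℂ)) ↔ ∃ k : ℤ, s = (dd:ℂ) + ((k:ℂ) + 1/2) * pp * I := by
  have hneg : -cexp ((lm:ℂ)) = cexp ((lm:ℂ) + Real.pi * I) := by
    rw [Complex.exp_add, Complex.exp_pi_mul_I]; ring
  rw [hneg, Complex.exp_eq_exp_iff_exists_int]
  have hLc : (L:ℂ) ≠ 0 := by exact_mod_cast hL
  have hdc : (dd:ℂ) * L = -(lm:ℂ) := by exact_mod_cast hdd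
  have hpc : (pp:ℂ) * L = 2 * (Real.pi:ℂ) := by exact_mod_cast hpp
  constructor
  · rintro ⟨n, hn⟩
    refine ⟨-n - 1, mul_left_cancel₀ hLc ?_⟩
    push_cast
    linear_combination -hn - hdc + (((n:ℂ) + 1/2) * I) * hpc
  · rintro ⟨k, hk⟩
    refine ⟨-k - 1, ?_⟩
    subst hk
    push_cast
    linear_combination -hdc + ((-(k:ℂ) - 1/2) * I) * hpc

set_option maxHeartbeats 1000000 in
/-- For the Mauldin–Williams matrix `A(s) = [[0, 4·2^{-s}], [2^{-s}, 2^{-s} + 3·4^{-s}]]`: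
the unique real `s ≥ 0` with spectral radius `1` is `D = log₂((√29+1)/2)`, and the set of
complex zeros of `det(I - A(s))` is
`{D + ikp : k ∈ ℤ} ∪ {log₂((√29-1)/2) + i(k+1/2)p : k ∈ ℤ}` with `p = 2π/ln 2`. -/
theorem example_MW_matrix_sim_value_and_complex_dimensions
    (A : ℂ → Matrix (Fin 2) (Fin 2) ℂ)
    (hA : ∀ s, A s = !![0, 4 * (2 : ℂ) ^ (-s);
                        (2 : ℂ) ^ (-s), (2 : ℂ) ^ (-s) + 3 * (4 : ℂ) ^ (-s)])
    (D D' p : ℝ)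
    (hD : D = Real.logb 2 ((Real.sqrt 29 + 1) / 2))
    (hD' : D' = Real.logb 2 ((Real.sqrt 29 - 1) / 2))
    (hp : p = 2 * Real.pi / Real.log 2) :
    (∀ s : ℝ, 0 ≤ s → (spectralRadius ℂ (A s) = 1 ↔ s = D)) ∧
    {s : ℂ | (1 - A s).det = 0} =
      {s : ℂ | ∃ k : ℤ, s = (D : ℂ) + (k : ℂ) * p * I} ∪
      {s : ℂ | ∃ k : ℤ, s = (D' : ℂ) + ((k : ℂ) + 1 / 2) * p * I} := by
  have hw2 := sqrt29_sq
  have hw5 := sqrt29_gt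
  have hL0 : Real.log 2 ≠ 0 := ne_of_gt (Real.log_pos (by norm_num))
  constructor
  · -- Part 1: spectral radius
    intro s _
    set z : ℝ := (2:ℝ) ^ (-s) with hz
    have hzpos : 0 < z := Real.rpow_pos_of_pos (by norm_num) _
    set t : ℝ := z + 3*z^2 with ht
    set dd : ℝ := Real.sqrt (t^2 + 16*z^2) with hdd
    have h0 : (0:ℝ) ≤ t^2 + 16*z^2 := by positivity
    have hd2 : dd^2 = t^2 + 16*z^2 := Real.sq_sqrt h0
    have hd0 : 0 ≤ dd := Real.sqrt_nonneg _
    set r1 : ℝ := (t+dd)/2 with hr1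
    set r2 : ℝ := (t-dd)/2 with hr2
    have htpos : 0 < t := by nlinarith
    have h1pos : 0 < r1 := by rw [hr1]; positivity
    -- entries as reals
    have h2 : (2:ℂ)^(-(s:ℂ)) = (z:ℂ) := by
      rw [hz, Complex.ofReal_cpow (by norm_num : (0:ℝ) ≤ 2)]
      push_cast
      rfl
    have h4 : (4:ℂ)^(-(s:ℂ)) = ((z:ℂ))^2 := by
      have hr : (4:ℝ)^(-s) = z^2 := by
        rw [hz, show (4:ℝ) = 2^(2:ℕ) by norm_num, ← Real.rpow_natCast 2 2,
          ← Real.rpow_mul (by norm_num), show ((2:ℕ):ℝ) * (-s) = (-s) * ((2:ℕ):ℝ) by ring,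
          Real.rpow_mul (by norm_num), Real.rpow_natCast]
      rw [show ((z:ℂ))^2 = (((z^2 : ℝ)):ℂ) by push_cast; ring, ← hr,
        Complex.ofReal_cpow (by norm_num : (0:ℝ) ≤ 4)]
      push_cast
      rfl
    have hprod : r1 * r2 = -(4*z^2) := by rw [hr1, hr2]; nlinarith [hd2]
    have hsum : r1 + r2 = t := by rw [hr1, hr2]; ring
    -- the spectrum
    have hspec : spectrum ℂ (A s) = {((r1:ℝ):ℂ), ((r2:ℝ):ℂ)} := by
      ext k
      rw [spectrum.mem_iff, Matrix.isUnit_iff_isUnit_det, isUnit_iff_ne_zero, not_not]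
      have hM : (algebraMap ℂ (Matrix (Fin 2) (Fin 2) ℂ)) k - A s
          = !![k, -(4*(z:ℂ)); -(z:ℂ), k - ((z:ℂ) + 3*(z:ℂ)^2)] := by
        rw [hA, h2, h4]; ext i j; fin_cases i <;> fin_cases j <;>
          simp [Matrix.algebraMap_matrix_apply]
      rw [hM, Matrix.det_fin_two_of]
      have key : k * (k - ((z:ℂ) + 3*(z:ℂ)^2)) - -(4*(z:ℂ)) * -(z:ℂ)
          = (k - r1) * (k - r2) := by
        have hpc : (r1:ℂ) * (r2:ℂ) = -(4*(z:ℂ)^2) := by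
          exact_mod_cast congrArg Complex.ofReal hprod
        have hsc : (r1:ℂ) + (r2:ℂ) = (z:ℂ) + 3*(z:ℂ)^2 := by
          have h' : r1 + r2 = z + 3*z^2 := by rw [hsum, ht]
          exact_mod_cast congrArg Complex.ofReal h'
        linear_combination -hpc + (k : ℂ) * hsc
      rw [key, mul_eq_zero, sub_eq_zero, sub_eq_zero]
      simp [Set.mem_insert_iff, Set.mem_singleton_iff]
    -- spectral radius = 1 ↔ r1 = 1
    have hrad : spectralRadius ℂ (A s) = 1 ↔ r1 = 1 := by
      have h21 : |r2| ≤ |r1| := by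
        rw [abs_of_pos h1pos, abs_le]
        constructor <;> [rw [hr2, hr1]; rw [hr2, hr1]] <;> nlinarith
      have heq : spectralRadius ℂ (A s) = (‖((r1:ℝ):ℂ)‖₊ : ENNReal) := by
        rw [spectralRadius, hspec]
        rw [show ({((r1:ℝ):ℂ), ((r2:ℝ):ℂ)} : Set ℂ) = insert ((r1:ℝ):ℂ) {((r2:ℝ):ℂ)} from rfl,
          iSup_insert, iSup_singleton]
        rw [sup_eq_left]
        apply ENNReal.coe_le_coe.2
        rw [← NNReal.coe_le_coe]
        simpa [Complex.norm_real, Real.norm_eq_abs] using h21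
      rw [heq, show (1 : ENNReal) = ((1:NNReal) : ENNReal) from rfl, ENNReal.coe_inj]
      rw [← NNReal.coe_inj]
      simp only [coe_nnnorm, Complex.norm_real, Real.norm_eq_abs, NNReal.coe_one]
      rw [abs_of_pos h1pos]
    rw [hrad]
    -- r1 = 1 ↔ z = (√29-1)/14
    have hr1z : r1 = 1 ↔ z = (Real.sqrt 29 - 1)/14 := by
      constructor
      · intro h
        have hdt : dd = 2 - t := by rw [hr1] at h; linarith
        have hquad : 7*z^2 + z - 1 = 0 := by
          rw [hdt] at hd2; rw [ht] at hd2; nlinarith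
        have hfac : (14*z + 1 - Real.sqrt 29) * (14*z + 1 + Real.sqrt 29) = 0 := by
          linear_combination 28*hquad - hw2
        rcases mul_eq_zero.1 hfac with h' | h'
        · linarith
        · linarith
      · intro hzv
        have hquad : 7*z^2 + z - 1 = 0 := by
          rw [hzv]; linear_combination (1/28 : ℝ) * hw2
        have h1t : 1 - t - 4*z^2 = 0 := by rw [ht]; linarith
        have harg : t^2 + 16*z^2 = (2-t)^2 := by linear_combination (-4:ℝ) * h1t
        have hdt : dd = 2 - t := by
          rw [hdd, harg, Real.sqrt_sq_eq_abs, abs_of_pos (by nlinarith : (0:ℝ) < 2 - t)]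
        rw [hr1, hdt]; ring
    rw [hr1z]
    -- z = (√29-1)/14 ↔ s = D
    have hpos2 : (0:ℝ) < (Real.sqrt 29 + 1)/2 := by positivity
    constructor
    · intro h
      have h2 := congrArg (Real.logb 2) h
      rw [hz, Real.logb_rpow (by norm_num) (by norm_num)] at h2
      have h3 : Real.logb 2 ((Real.sqrt 29 - 1)/14) = -D := by
        rw [hD, ← Real.logb_inv, inv_p, inv_inv]
      rw [h3] at h2
      linarith
    · intro h
      rw [hz, h, hD, Real.rpow_neg (by norm_num : (0:ℝ) ≤ 2),
        Real.rpow_logb (by norm_num) (by norm_num) hpos2, inv_p, inv_inv]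
  · -- Part 2: zero set of det(1 - A s)
    have hdet : ∀ s : ℂ, (1 - A s).det
        = 1 - cexp ((Real.log 2 : ℂ) * (-s)) - 7 * (cexp ((Real.log 2 : ℂ) * (-s)))^2 := by
      intro s
      have hl2 : Complex.log 2 = (Real.log 2 : ℂ) := by
        rw [show (2:ℂ) = ((2:ℝ):ℂ) by norm_num, ← Complex.ofReal_log (by norm_num)]
      have h2e : (2:ℂ)^(-s) = cexp ((Real.log 2 : ℂ) * (-s)) := by
        rw [cpow_def_of_ne_zero (by norm_num), hl2]
      have h4 : (4:ℂ)^(-s) = ((2:ℂ)^(-s))^2 := by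
        rw [cpow_def_of_ne_zero (by norm_num), cpow_def_of_ne_zero (by norm_num)]
        rw [show Complex.log 4 = 2 * Complex.log 2 by
          rw [show (4:ℂ) = ((4:ℝ):ℂ) by norm_num, ← Complex.ofReal_log (by norm_num),
            show (2:ℂ) = ((2:ℝ):ℂ) by norm_num, ← Complex.ofReal_log (by norm_num)]
          rw [show (4:ℝ) = 2^(2:ℕ) by norm_num, Real.log_pow]
          push_cast; ring]
        rw [sq, ← Complex.exp_add]; ring_nf
      have h1 : (1 - A s) = !![1, -(4 * (2:ℂ)^(-s));
          -((2:ℂ)^(-s)), 1 - ((2:ℂ)^(-s) + 3 * (4:ℂ)^(-s))] := by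
        rw [hA]; ext i j; fin_cases i <;> fin_cases j <;> simp [Matrix.one_apply]
      rw [h1, Matrix.det_fin_two_of, h4, h2e]; ring
    ext s
    simp only [Set.mem_setOf_eq, Set.mem_union]
    rw [hdet s]
    set w : ℂ := cexp ((Real.log 2 : ℂ) * (-s)) with hwdef
    -- factor the quadratic
    have hfac : 1 - w - 7*w^2
        = (-7) * (w - (((Real.sqrt 29 - 1)/14 : ℝ) : ℂ))
          * (w - ((-(Real.sqrt 29 + 1)/14 : ℝ) : ℂ)) := by
      have hw2c : ((Real.sqrt 29 : ℝ) : ℂ)^2 = 29 := by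
        rw [← Complex.ofReal_pow, hw2]; norm_num
      push_cast
      linear_combination (-1/28 : ℂ) * hw2c
    rw [hfac, mul_eq_zero, mul_eq_zero]
    have h7 : ((-7 : ℂ) = 0) = False := by norm_num
    -- real log identities
    have hDL : D * Real.log 2 = -Real.log ((Real.sqrt 29 - 1)/14) := by
      rw [hD, Real.logb, div_mul_cancel₀ _ hL0, inv_p, Real.log_inv]
    have hD'L : D' * Real.log 2 = -Real.log ((Real.sqrt 29 + 1)/14) := by
      rw [hD', Real.logb, div_mul_cancel₀ _ hL0, inv_m, Real.log_inv]
    have hpL : p * Real.log 2 = 2 * Real.pi := by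
      rw [hp, div_mul_cancel₀ _ hL0]
    have hcp : (((Real.sqrt 29 - 1)/14 : ℝ) : ℂ) = cexp ((Real.log ((Real.sqrt 29 - 1)/14) : ℂ)) := by
      rw [← Complex.ofReal_exp, Real.exp_log (by apply div_pos <;> [linarith; norm_num])]
    have hcm : ((-(Real.sqrt 29 + 1)/14 : ℝ) : ℂ)
        = -cexp ((Real.log ((Real.sqrt 29 + 1)/14) : ℂ)) := by
      rw [← Complex.ofReal_exp, Real.exp_log (by apply div_pos <;> [linarith; norm_num])]
      push_cast; ring
    constructor
    · rintro ((h | h) | h)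
      · exact absurd h (by norm_num)
      · left
        rw [sub_eq_zero, hcp] at h
        exact (exp_solve_pos (Real.log 2) _ D p hL0 hDL hpL s).1 h
      · right
        rw [sub_eq_zero, hcm] at h
        exact (exp_solve_neg (Real.log 2) _ D' p hL0 hD'L hpL s).1 h
    · rintro (h | h)
      · refine Or.inl (Or.inr ?_)
        rw [sub_eq_zero, hcp]
        exact (exp_solve_pos (Real.log 2) _ D p hL0 hDL hpL s).2 h
      · refine Or.inr ?_
        rw [sub_eq_zero, hcm]
        exact (exp_solve_neg (Real.log 2) _ D' p hL0 hD'L hpL s).2 h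
end

section
/- If h : ℝ → ℝ satisfies h(x) = Σ_{j=1}^{J} r_j^D h(x − log(1/r_j)) + ψ(x) where r_j ∈ (0,1), Σ_j r_j^D = 1, |ψ(x)| ≤ M e^{−τ|x|} with M, τ > 0, and h(x) → 0 as x → −∞, then h is bounded on ℝ. -/
open Finset Filter Topology

/-- One-dimensional renewal lemma: if `h : ℝ → ℝ` satisfies
`h(x) = ∑_j r_j^D h(x - log(1/r_j)) + ψ(x)` with `r_j ∈ (0,1)`, `∑_j r_j^D = 1`,
`|ψ(x)| ≤ M e^{-τ|x|}` and `h(x) → 0` as `x → -∞`, then `h` is bounded on `ℝ`. -/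
theorem one_dim_renewal_lemma
    (J : ℕ) (hJ : 1 ≤ J) (r : Fin J → ℝ) (hr : ∀ j, 0 < r j ∧ r j < 1)
    (D : ℝ) (hD : ∑ j, r j ^ D = 1)
    (h ψ : ℝ → ℝ) (M τ : ℝ) (hM : 0 < M) (hτ : 0 < τ)
    (hψ : ∀ x, |ψ x| ≤ M * Real.exp (-τ * |x|))
    (heq : ∀ x, h x = (∑ j, r j ^ D * h (x - Real.log (1 / r j))) + ψ x)
    (hlim : Tendsto h atBot (𝓝 0)) :
    ∃ C : ℝ, ∀ x, |h x| ≤ C := by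
  haveI : NeZero J := ⟨Nat.one_le_iff_ne_zero.mp hJ⟩
  have hne : (Finset.univ : Finset (Fin J)).Nonempty := univ_nonempty
  set γ : ℝ := Finset.univ.inf' hne (fun j => Real.log (1 / r j)) with hγdef
  have hγpos : 0 < γ := by
    apply Finset.lt_inf'_iff hne |>.mpr
    intro j _
    have := hr j
    exact Real.log_pos (by rw [lt_div_iff₀ this.1]; linarith)
  have hγle : ∀ j : Fin J, γ ≤ Real.log (1 / r j) := fun j =>
    Finset.inf'_le _ (mem_univ j)
  -- get x₀ with |h x| ≤ 1 for x ≤ x₀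
  have h1 : ∀ᶠ x in atBot, dist (h x) 0 < 1 := Metric.tendsto_nhds.mp hlim 1 one_pos
  obtain ⟨x₀, hx₀⟩ := eventually_atBot.mp h1
  have hbase : ∀ x ≤ x₀, |h x| ≤ 1 := by
    intro x hx
    have := hx₀ x hx
    rw [Real.dist_eq, sub_zero] at this
    exact this.le
  set q : ℝ := Real.exp (-τ * γ) with hq
  have hq0 : 0 < q := Real.exp_pos _
  have hq1 : q < 1 := by
    rw [hq, Real.exp_lt_one_iff]
    nlinarith
  set A : ℝ := Real.exp (-τ * x₀) with hA
  have hA0 : 0 < A := Real.exp_pos _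
  have hrD : ∀ j : Fin J, 0 < r j ^ D := fun j => Real.rpow_pos_of_pos (hr j).1 _
  -- main induction
  have key : ∀ n : ℕ, ∀ x, x ≤ x₀ + n * γ → |h x| ≤ 1 + M * ∑ k ∈ range n, A * q ^ k := by
    intro n
    induction n with
    | zero =>
      intro x hx
      simp only [range_zero, sum_empty, mul_zero, add_zero]
      exact hbase x (by simpa using hx)
    | succ n ih =>
      intro x hx
      by_cases hcase : x ≤ x₀ + n * γ
      · refine (ih x hcase).trans ?_
        have : (0:ℝ) ≤ A * q ^ n := by positivity
        rw [Finset.sum_range_succ]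
        nlinarith
      · push_neg at hcase
        have hx' : ∀ j : Fin J, x - Real.log (1 / r j) ≤ x₀ + n * γ := by
          intro j
          have := hγle j
          push_cast at hx ⊢
          linarith
        have hsum : |∑ j, r j ^ D * h (x - Real.log (1 / r j))| ≤
            1 + M * ∑ k ∈ range n, A * q ^ k := by
          calc |∑ j, r j ^ D * h (x - Real.log (1 / r j))|
              ≤ ∑ j, |r j ^ D * h (x - Real.log (1 / r j))| := Finset.abs_sum_le_sum_abs _ _
            _ ≤ ∑ j, r j ^ D * (1 + M * ∑ k ∈ range n, A * q ^ k) := by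
                apply Finset.sum_le_sum
                intro j _
                rw [abs_mul, abs_of_pos (hrD j)]
                exact mul_le_mul_of_nonneg_left (ih _ (hx' j)) (hrD j).le
            _ = 1 + M * ∑ k ∈ range n, A * q ^ k := by
                rw [← Finset.sum_mul, hD, one_mul]
        have hψx : |ψ x| ≤ M * (A * q ^ n) := by
          refine (hψ x).trans ?_
          have habs : x₀ + n * γ ≤ |x| := le_trans hcase.le (le_abs_self x)
          have : Real.exp (-τ * |x|) ≤ A * q ^ n := by
            rw [hA, hq, ← Real.exp_nat_mul, ← Real.exp_add]
            apply Real.exp_le_exp.mpr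
            nlinarith
          nlinarith
        calc |h x| = |(∑ j, r j ^ D * h (x - Real.log (1 / r j))) + ψ x| := by rw [heq x]
          _ ≤ |∑ j, r j ^ D * h (x - Real.log (1 / r j))| + |ψ x| := abs_add_le _ _
          _ ≤ (1 + M * ∑ k ∈ range n, A * q ^ k) + M * (A * q ^ n) := add_le_add hsum hψx
          _ = 1 + M * ∑ k ∈ range (n+1), A * q ^ k := by
              rw [Finset.sum_range_succ]; ring
  -- geometric sum bound
  have hgeo : ∀ n : ℕ, ∑ k ∈ range n, A * q ^ k ≤ A * (1 / (1 - q)) := by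
    intro n
    rw [← Finset.mul_sum]
    apply mul_le_mul_of_nonneg_left _ hA0.le
    have h1q : 0 < 1 - q := by linarith
    have hqn : 0 ≤ q ^ n := pow_nonneg hq0.le n
    rw [geom_sum_eq hq1.ne n]
    have heq' : (q ^ n - 1) / (q - 1) = (1 - q ^ n) / (1 - q) := by rw [← neg_div_neg_eq, neg_sub, neg_sub]
    rw [heq']
    gcongr
    linarith
  refine ⟨1 + M * (A * (1 / (1 - q))), fun x => ?_⟩
  obtain ⟨n, hn⟩ := exists_nat_ge ((x - x₀) / γ)
  have hxn : x ≤ x₀ + n * γ := by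
    rw [div_le_iff₀ hγpos] at hn
    linarith
  refine (key n x hxn).trans ?_
  have := hgeo n
  nlinarith
end
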